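/- arXiv:2311.12575 — 4 statements merged into one kernel-verified Lean document; each statement's English description precedes it below -/
import Mathlib

section
/- Let a < b be reals, e ∈ [a,b], K a natural number, and ε ≥ 0. Let ε_0, ε_1, …, ε_K be reals with |ε_k| ≤ ε for all 0 ≤ k ≤ K, and let w_1, …, w_K be reals with |w_k| ≤ 1 for all 1 ≤ k ≤ K. Then |(ε_0/2)·(e−a) + ∑_{k=1}^K w_k · ε_k · ((b−a)/(kπ)) · sin(kπ(e−a)/(b−a))| ≤ √(K+1) · ε · √((e−a)²/4 + (b−a)²/6). -/
open Real Finset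

/-! Bound every term by `ε` times the absolute value of its Fourier-cosine weight, `(e - a) / 2`
for the constant term and `(b - a) / (kπ)` for the others (using `|w k| ≤ 1` and `|sin| ≤ 1`).
Cauchy–Schwarz over the `K + 1` terms turns the sum of these weights into `√(K + 1)` times their
`ℓ²` norm, and the Basel sum `∑ 1 / k² ≤ π² / 6` bounds the squared weights by
`(e - a)² / 4 + (b - a)² / 6`. -/

theorem sq_add_sum_le_card_succ_mul_sq_add_sum_sq {ι : Type*} (y : ℝ) (g : ι → ℝ)
    (s : Finset ι) :
    (y + ∑ i ∈ s, g i) ^ 2 ≤ (#s + 1) * (y ^ 2 + ∑ i ∈ s, g i ^ 2) := by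
  simpa [sum_insertNone, add_comm] using
    sq_sum_le_card_mul_sum_sq (s := s.insertNone) (f := fun o => o.elim y g)

theorem abs_add_sum_le_sqrt_card_succ_mul {ι : Type*} {s : Finset ι} {ε x y : ℝ}
    {f g : ι → ℝ} (hε : 0 ≤ ε) (hx : |x| ≤ ε * |y|) (hf : ∀ i ∈ s, |f i| ≤ ε * |g i|) :
    |x + ∑ i ∈ s, f i| ≤ √(#s + 1) * ε * √(y ^ 2 + ∑ i ∈ s, g i ^ 2) := by
  have hcs : |y| + ∑ i ∈ s, |g i| ≤ √(#s + 1) * √(y ^ 2 + ∑ i ∈ s, g i ^ 2) := by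
    rw [← sqrt_mul (by positivity)]
    apply le_sqrt_of_sq_le
    simpa only [sq_abs] using sq_add_sum_le_card_succ_mul_sq_add_sum_sq |y| (|g ·|) s
  calc |x + ∑ i ∈ s, f i| ≤ |x| + ∑ i ∈ s, |f i| :=
        (abs_add_le _ _).trans (add_le_add_right (abs_sum_le_sum_abs _ _) _)
    _ ≤ ε * (|y| + ∑ i ∈ s, |g i|) := by
        rw [mul_add, mul_sum]
        exact add_le_add hx (sum_le_sum hf)
    _ ≤ ε * (√(#s + 1) * √(y ^ 2 + ∑ i ∈ s, g i ^ 2)) := by gcongr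
    _ = _ := by ring

-- No positivity condition on `s` is needed: the `k = 0` term is `1 / 0 = 0`.
theorem sum_one_div_sq_le_pi_sq_div_six (s : Finset ℕ) :
    ∑ k ∈ s, 1 / (k : ℝ) ^ 2 ≤ π ^ 2 / 6 :=
  sum_le_hasSum s (fun _ _ => by positivity) hasSum_zeta_two

theorem sum_div_nat_mul_pi_sq_le (L : ℝ) (s : Finset ℕ) :
    ∑ k ∈ s, (L / (k * π)) ^ 2 ≤ L ^ 2 / 6 := by
  calc ∑ k ∈ s, (L / (k * π)) ^ 2 = L ^ 2 / π ^ 2 * ∑ k ∈ s, 1 / (k : ℝ) ^ 2 := by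
        rw [mul_sum]
        refine sum_congr rfl fun k _ => ?_
        rw [div_pow, mul_pow]
        field_simp
    _ ≤ L ^ 2 / π ^ 2 * (π ^ 2 / 6) := by gcongr; exact sum_one_div_sq_le_pi_sq_div_six s
    _ = L ^ 2 / 6 := by field_simp

theorem abs_mul_mul_mul_sin_le {u r c θ ε : ℝ} (hu : |u| ≤ 1) (hr : |r| ≤ ε) :
    |u * r * c * sin θ| ≤ ε * |c| := by
  have hε : 0 ≤ ε := (abs_nonneg r).trans hr
  calc |u * r * c * sin θ| = |u| * |r| * |c| * |sin θ| := by simp only [abs_mul]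
    _ ≤ 1 * ε * |c| * 1 := by gcongr; exact abs_sin_le_one θ
    _ = ε * |c| := by ring

theorem coefficient_error_propagation_filtered_general
    (a b e : ℝ) (K : ℕ) (ε : ℝ)
    (err : ℕ → ℝ) (herr : ∀ k : ℕ, k ≤ K → |err k| ≤ ε)
    (w : ℕ → ℝ) (hw : ∀ k : ℕ, 1 ≤ k → k ≤ K → |w k| ≤ 1) :
    |err 0 / 2 * (e - a) +
        ∑ k ∈ Finset.Icc 1 K,
          w k * err k * ((b - a) / ((k : ℝ) * π)) * Real.sin ((k : ℝ) * π * (e - a) / (b - a))|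
      ≤ Real.sqrt ((K : ℝ) + 1) * ε * Real.sqrt ((e - a) ^ 2 / 4 + (b - a) ^ 2 / 6) := by
  have hε : 0 ≤ ε := (abs_nonneg _).trans (herr 0 K.zero_le)
  have hhead : |err 0 / 2 * (e - a)| ≤ ε * |(e - a) / 2| := by
    rw [← mul_div_right_comm, mul_div_assoc, abs_mul]
    gcongr
    exact herr 0 K.zero_le
  have hterm : ∀ k ∈ Icc 1 K, |w k * err k * ((b - a) / (k * π)) * sin (k * π * (e - a) / (b - a))|
      ≤ ε * |(b - a) / (k * π)| := fun k hk =>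
    abs_mul_mul_mul_sin_le (hw k (mem_Icc.1 hk).1 (mem_Icc.1 hk).2) (herr k (mem_Icc.1 hk).2)
  have hsq : ((e - a) / 2) ^ 2 + ∑ k ∈ Icc 1 K, ((b - a) / (k * π)) ^ 2
      ≤ (e - a) ^ 2 / 4 + (b - a) ^ 2 / 6 := by
    rw [div_pow, show (2 : ℝ) ^ 2 = 4 by norm_num]
    gcongr
    exact sum_div_nat_mul_pi_sq_le _ _
  calc _ ≤ √(#(Icc 1 K) + 1) * ε * √(((e - a) / 2) ^ 2 + ∑ k ∈ Icc 1 K, ((b - a) / (k * π)) ^ 2) :=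
        abs_add_sum_le_sqrt_card_succ_mul hε hhead hterm
    _ ≤ _ := by
        rw [Nat.card_Icc, Nat.add_sub_cancel]
        gcongr

/-- Filtered variant of the coefficient-error propagation bound (paper's Lemma A.2,
counterparty level): multiplying each term by a filter value `w k` with `|w k| ≤ 1`
preserves the `√(K+1) · ε` bound. -/
theorem coefficient_error_propagation_filtered
    (a b e : ℝ) (hab : a < b) (he : e ∈ Set.Icc a b) (K : ℕ) (ε : ℝ) (hε : 0 ≤ ε)
    (err : ℕ → ℝ) (herr : ∀ k : ℕ, k ≤ K → |err k| ≤ ε)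
    (w : ℕ → ℝ) (hw : ∀ k : ℕ, 1 ≤ k → k ≤ K → |w k| ≤ 1) :
    |err 0 / 2 * (e - a) +
        ∑ k ∈ Finset.Icc 1 K,
          w k * err k * ((b - a) / ((k : ℝ) * π)) * Real.sin ((k : ℝ) * π * (e - a) / (b - a))|
      ≤ Real.sqrt ((K : ℝ) + 1) * ε * Real.sqrt ((e - a) ^ 2 / 4 + (b - a) ^ 2 / 6) :=
  coefficient_error_propagation_filtered_general a b e K ε err herr w hw
end

section
/- Let f : ℝ → ℝ be a nonnegative, bounded, Lebesgue-integrable function with ∫_ℝ f = 1 and with finite first and second moments, i.e. ∫_ℝ |v| f(v) dv < ∞ and ∫_ℝ v² f(v) dv < ∞. Fix a natural number K and a real e. For reals a < b with a ≤ e ≤ b, define ε₂(a,b) = ((e−a)/(b−a)) · ∫_{ℝ∖[a,b]} f(v) dv + ∑_{k=1}^K (2/(kπ)) · sin(kπ(e−a)/(b−a)) · ∫_{ℝ∖[a,b]} cos(kπ(v−a)/(b−a)) f(v) dv. Then ε₂(a,b) tends to 0 as a → −∞ and b → +∞ (i.e. along the filter atBot ×ˢ atTop on pairs (a,b)). -/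
open Real MeasureTheory Filter

/-!
Every term of `ε₂` is a bounded factor times an integral over `ℝ ∖ [a, b]` of `f` against a
function bounded by one in absolute value. Once `a ≤ e ≤ b`, so that `|(e - a)/(b - a)| ≤ 1`,
this gives `|ε₂(a, b)| ≤ (1 + ∑ 2/(kπ)) ∫_{ℝ∖[a,b]} |f|`, and the tail integral of the
integrable function `|f|` vanishes as `[a, b]` exhausts `ℝ`.
-/

noncomputable def cosRangeTruncationError (f : ℝ → ℝ) (K : ℕ) (e a b : ℝ) : ℝ :=
  (e - a) / (b - a) * (∫ v in (Set.Icc a b)ᶜ, f v) +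
    ∑ k ∈ Finset.Icc 1 K,
      2 / ((k : ℝ) * π) * Real.sin ((k : ℝ) * π * (e - a) / (b - a)) *
        ∫ v in (Set.Icc a b)ᶜ, Real.cos ((k : ℝ) * π * (v - a) / (b - a)) * f v

theorem tendsto_setIntegral_compl_Icc_atBot_atTop {E : Type*} [NormedAddCommGroup E]
    [NormedSpace ℝ E] {g : ℝ → E} (hg : Integrable g) :
    Tendsto (fun p : ℝ × ℝ => ∫ v in (Set.Icc p.1 p.2)ᶜ, g v) (atBot ×ˢ atTop)
      (nhds 0) := by
  have hIcc : Tendsto (fun p : ℝ × ℝ => ∫ v in Set.Icc p.1 p.2, g v) (atBot ×ˢ atTop)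
      (nhds (∫ v, g v)) :=
    (aecover_Icc tendsto_fst tendsto_snd).integral_tendsto_of_countably_generated hg
  have hcompl := (tendsto_const_nhds (x := ∫ v, g v)).sub hIcc
  rw [sub_self] at hcompl
  refine hcompl.congr fun p => ?_
  rw [setIntegral_compl measurableSet_Icc hg]

theorem abs_integral_cos_mul_le {α : Type*} [MeasurableSpace α] {μ : Measure α}
    {f : α → ℝ} (hf : Integrable f μ) (θ : α → ℝ) :
    |∫ x, Real.cos (θ x) * f x ∂μ| ≤ ∫ x, |f x| ∂μ :=
  (Real.norm_eq_abs _).symm.trans_le <|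
    norm_integral_le_of_norm_le hf.abs <| ae_of_all _ fun x => by
      rw [norm_mul, Real.norm_eq_abs, Real.norm_eq_abs]
      exact mul_le_of_le_one_left (abs_nonneg _) (Real.abs_cos_le_one _)

theorem abs_cosRangeTruncationError_le {f : ℝ → ℝ} (hf : Integrable f) (K : ℕ) {e a b : ℝ}
    (hae : a ≤ e) (heb : e ≤ b) (hab : a < b) :
    |cosRangeTruncationError f K e a b| ≤
      (1 + ∑ k ∈ Finset.Icc 1 K, 2 / ((k : ℝ) * π)) * ∫ v in (Set.Icc a b)ᶜ, |f v| := by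
  set tail := ∫ v in (Set.Icc a b)ᶜ, |f v|
  have hf_tail := hf.restrict (s := (Set.Icc a b)ᶜ)
  have hratio : |(e - a) / (b - a)| ≤ 1 := by
    rw [abs_div, abs_of_nonneg (sub_nonneg.2 hae), abs_of_pos (sub_pos.2 hab),
      div_le_one (sub_pos.2 hab)]
    linarith
  have hmass : |∫ v in (Set.Icc a b)ᶜ, f v| ≤ tail := abs_integral_le_integral_abs
  have hterm : ∀ k : ℕ,
      |2 / ((k : ℝ) * π) * Real.sin ((k : ℝ) * π * (e - a) / (b - a)) *
          ∫ v in (Set.Icc a b)ᶜ, Real.cos ((k : ℝ) * π * (v - a) / (b - a)) * f v|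
        ≤ 2 / ((k : ℝ) * π) * tail := fun k => by
    rw [abs_mul, abs_mul, abs_of_nonneg (by positivity : (0 : ℝ) ≤ 2 / ((k : ℝ) * π))]
    calc _ ≤ 2 / ((k : ℝ) * π) * 1 * tail := by
          gcongr
          · exact Real.abs_sin_le_one _
          · exact abs_integral_cos_mul_le hf_tail _
      _ = _ := by rw [mul_one]
  calc |cosRangeTruncationError f K e a b|
      ≤ |(e - a) / (b - a)| * |∫ v in (Set.Icc a b)ᶜ, f v| +
          ∑ k ∈ Finset.Icc 1 K,
            |2 / ((k : ℝ) * π) * Real.sin ((k : ℝ) * π * (e - a) / (b - a)) *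
              ∫ v in (Set.Icc a b)ᶜ, Real.cos ((k : ℝ) * π * (v - a) / (b - a)) * f v| := by
        rw [← abs_mul]
        exact (abs_add_le _ _).trans (add_le_add_right (Finset.abs_sum_le_sum_abs _ _) _)
    _ ≤ 1 * tail + ∑ k ∈ Finset.Icc 1 K, 2 / ((k : ℝ) * π) * tail := by
        gcongr with k
        exact hterm k
    _ = _ := by rw [← Finset.sum_mul]; ring

theorem tendsto_cosRangeTruncationError {f : ℝ → ℝ} (hf : Integrable f) (K : ℕ) (e : ℝ) :
    Tendsto (fun p : ℝ × ℝ => cosRangeTruncationError f K e p.1 p.2) (atBot ×ˢ atTop)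
      (nhds 0) := by
  have hrange : ∀ᶠ p : ℝ × ℝ in atBot ×ˢ atTop, p.1 ≤ e - 1 ∧ e + 1 ≤ p.2 :=
    (tendsto_fst.eventually (eventually_le_atBot _)).and
      (tendsto_snd.eventually (eventually_ge_atTop _))
  have htail := (tendsto_setIntegral_compl_Icc_atBot_atTop hf.abs).const_mul
    (1 + ∑ k ∈ Finset.Icc 1 K, 2 / ((k : ℝ) * π))
  rw [mul_zero] at htail
  refine squeeze_zero_norm' ?_ htail
  filter_upwards [hrange] with p ⟨ha, hb⟩
  exact abs_cosRangeTruncationError_le hf K (by linarith) (by linarith) (by linarith)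

theorem cos_range_truncation_error_tendsto_zero_general
    (f : ℝ → ℝ)
    (hf_int : Integrable f)
    (K : ℕ) (e : ℝ) :
    Tendsto
      (fun p : ℝ × ℝ =>
        (e - p.1) / (p.2 - p.1) * (∫ v in (Set.Icc p.1 p.2)ᶜ, f v) +
          ∑ k ∈ Finset.Icc 1 K,
            2 / ((k : ℝ) * π) * Real.sin ((k : ℝ) * π * (e - p.1) / (p.2 - p.1)) *
              ∫ v in (Set.Icc p.1 p.2)ᶜ,
                Real.cos ((k : ℝ) * π * (v - p.1) / (p.2 - p.1)) * f v)
      (Filter.atBot ×ˢ Filter.atTop) (nhds 0) :=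
  tendsto_cosRangeTruncationError hf_int K e

/-- Paper's Lemma A.1 (netting-set level): the truncation-range error `ε₂` in the
COS-recovered CDF converges to 0 as the truncation range `[a,b]` grows to cover ℝ. -/
theorem cos_range_truncation_error_tendsto_zero
    (f : ℝ → ℝ) (hf_nonneg : ∀ v, 0 ≤ f v) (hf_bdd : ∃ M : ℝ, ∀ v, f v ≤ M)
    (hf_int : Integrable f)
    (hf_one : ∫ v, f v = 1)
    (hf_m1 : Integrable (fun v => |v| * f v))
    (hf_m2 : Integrable (fun v => v ^ 2 * f v))
    (K : ℕ) (e : ℝ) :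
    Tendsto
      (fun p : ℝ × ℝ =>
        (e - p.1) / (p.2 - p.1) * (∫ v in (Set.Icc p.1 p.2)ᶜ, f v) +
          ∑ k ∈ Finset.Icc 1 K,
            2 / ((k : ℝ) * π) * Real.sin ((k : ℝ) * π * (e - p.1) / (p.2 - p.1)) *
              ∫ v in (Set.Icc p.1 p.2)ᶜ,
                Real.cos ((k : ℝ) * π * (v - p.1) / (p.2 - p.1)) * f v)
      (Filter.atBot ×ˢ Filter.atTop) (nhds 0) :=
  cos_range_truncation_error_tendsto_zero_general f hf_int K e
end

section
/- Let f : ℝ → ℝ be a nonnegative, bounded, Lebesgue-integrable function with ∫_ℝ f = 1 and with finite first and second moments, i.e. ∫_ℝ |v| f(v) dv < ∞ and ∫_ℝ v² f(v) dv < ∞. Fix a natural number K, reals w_1, …, w_K with |w_k| ≤ 1 for all 1 ≤ k ≤ K, and a real e. For reals a < b with a ≤ e ≤ b, define ε₂(a,b) = ((e−a)/(b−a)) · ∫_{ℝ∖[a,b]} f(v) dv + ∑_{k=1}^K (2/(kπ)) · w_k · sin(kπ(e−a)/(b−a)) · ∫_{ℝ∖[a,b]} cos(kπ(v−a)/(b−a))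 f(v) dv. Then ε₂(a,b) tends to 0 as a → −∞ and b → +∞ (i.e. along the filter atBot ×ˢ atTop on pairs (a,b)). -/
open Real MeasureTheory Filter Topology Set

/-!
Each term of `ε₂(a, b)` is a coefficient that stays bounded as `a → -∞`, `b → ∞`
(the ratio `(e - a)/(b - a)` lies in `[0, 1]` once `a ≤ e ≤ b`, and `|sin| ≤ 1`) times an
integral over `ℝ ∖ [a, b]` of a function dominated by `|f|`. Such tail integrals tend to `0`
by dominated convergence, since every point eventually lies in `[a, b]`.
-/

theorem eventually_mem_Icc_atBot_prod_atTop (v : ℝ) :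
    ∀ᶠ p : ℝ × ℝ in atBot ×ˢ atTop, v ∈ Icc p.1 p.2 :=
  prod_mem_prod (Iic_mem_atBot v) (Ici_mem_atTop v)

section TailIntegral

variable {E : Type*} [NormedAddCommGroup E] [NormedSpace ℝ E] {μ : Measure ℝ}

theorem tendsto_setIntegral_compl_Icc_atBot_prod_atTop {g : ℝ → E}
    (hg : Integrable g μ) :
    Tendsto (fun p : ℝ × ℝ => ∫ v in (Icc p.1 p.2)ᶜ, g v ∂μ) (atBot ×ˢ atTop) (𝓝 0) := by
  simp_rw [← integral_indicator measurableSet_Icc.compl]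
  rw [← integral_zero ℝ E]
  refine tendsto_integral_filter_of_dominated_convergence (fun v => ‖g v‖)
    (Eventually.of_forall fun p => hg.aestronglyMeasurable.indicator measurableSet_Icc.compl)
    (Eventually.of_forall fun p => Eventually.of_forall fun v => norm_indicator_le_norm_self _ _)
    hg.norm (ae_of_all _ fun v => tendsto_const_nhds.congr' ?_)
  filter_upwards [eventually_mem_Icc_atBot_prod_atTop v] with p hp
  simp [hp]

theorem tendsto_setIntegral_compl_Icc_of_norm_le {f : ℝ → ℝ} (hf : Integrable f μ)
    {F : ℝ × ℝ → ℝ → E} (hF : ∀ p v, ‖F p v‖ ≤ ‖f v‖) :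
    Tendsto (fun p : ℝ × ℝ => ∫ v in (Icc p.1 p.2)ᶜ, F p v ∂μ) (atBot ×ˢ atTop) (𝓝 0) := by
  refine squeeze_zero_norm (fun p => ?_)
    (tendsto_setIntegral_compl_Icc_atBot_prod_atTop hf.norm)
  exact norm_integral_le_of_norm_le hf.norm.restrict (ae_of_all _ (hF p))

end TailIntegral

theorem isBoundedUnder_norm_div_sub_atBot_prod_atTop (e : ℝ) :
    IsBoundedUnder (· ≤ ·) (atBot ×ˢ atTop)
      (norm ∘ fun p : ℝ × ℝ => (e - p.1) / (p.2 - p.1)) := by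
  refine isBoundedUnder_of_eventually_le (a := 1) ?_
  filter_upwards [eventually_mem_Icc_atBot_prod_atTop e] with p ⟨hae, heb⟩
  rw [Function.comp_apply, norm_div, Real.norm_of_nonneg (by linarith),
    Real.norm_of_nonneg (by linarith)]
  exact div_le_one_of_le₀ (by linarith) (by linarith)

theorem cos_range_truncation_error_filtered_tendsto_zero_general
    (f : ℝ → ℝ)
    (hf_int : Integrable f)
    (K : ℕ) (w : ℕ → ℝ) (e : ℝ) :
    Tendsto
      (fun p : ℝ × ℝ =>
        (e - p.1) / (p.2 - p.1) * (∫ v in (Set.Icc p.1 p.2)ᶜ, f v) +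
          ∑ k ∈ Finset.Icc 1 K,
            2 / ((k : ℝ) * π) * w k * Real.sin ((k : ℝ) * π * (e - p.1) / (p.2 - p.1)) *
              ∫ v in (Set.Icc p.1 p.2)ᶜ,
                Real.cos ((k : ℝ) * π * (v - p.1) / (p.2 - p.1)) * f v)
      (Filter.atBot ×ˢ Filter.atTop) (nhds 0) := by
  have hcoeff (k : ℕ) : IsBoundedUnder (· ≤ ·) (atBot ×ˢ atTop) (norm ∘ fun p : ℝ × ℝ =>
      2 / ((k : ℝ) * π) * w k * Real.sin ((k : ℝ) * π * (e - p.1) / (p.2 - p.1))) := by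
    refine isBoundedUnder_of_eventually_le (a := ‖2 / ((k : ℝ) * π) * w k‖)
      (Eventually.of_forall fun p => ?_)
    rw [Function.comp_apply, norm_mul]
    exact mul_le_of_le_one_right (norm_nonneg _) (Real.abs_sin_le_one _)
  have hcos (k : ℕ) := tendsto_setIntegral_compl_Icc_of_norm_le hf_int
    (F := fun p v => Real.cos ((k : ℝ) * π * (v - p.1) / (p.2 - p.1)) * f v)
    fun p v => by
      rw [norm_mul]
      exact mul_le_of_le_one_left (norm_nonneg _) (Real.abs_cos_le_one _)
  have hratio := isBoundedUnder_le_mul_tendsto_zero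
    (isBoundedUnder_norm_div_sub_atBot_prod_atTop e)
    (tendsto_setIntegral_compl_Icc_of_norm_le hf_int fun _ _ => le_rfl)
  simpa using hratio.add
    (tendsto_finsetSum _ fun k _ => isBoundedUnder_le_mul_tendsto_zero (hcoeff k) (hcos k))

/-- Paper's Lemma A.1 (counterparty level): the truncation-range error `ε₂` in the
spectrally filtered COS-recovered CDF, with filter values `|w k| ≤ 1`, converges to 0
as the truncation range `[a,b]` grows to cover ℝ. -/
theorem cos_range_truncation_error_filtered_tendsto_zero
    (f : ℝ → ℝ) (hf_nonneg : ∀ v, 0 ≤ f v) (hf_bdd : ∃ M : ℝ, ∀ v, f v ≤ M)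
    (hf_int : Integrable f)
    (hf_one : ∫ v, f v = 1)
    (hf_m1 : Integrable (fun v => |v| * f v))
    (hf_m2 : Integrable (fun v => v ^ 2 * f v))
    (K : ℕ) (w : ℕ → ℝ) (hw : ∀ k : ℕ, 1 ≤ k → k ≤ K → |w k| ≤ 1) (e : ℝ) :
    Tendsto
      (fun p : ℝ × ℝ =>
        (e - p.1) / (p.2 - p.1) * (∫ v in (Set.Icc p.1 p.2)ᶜ, f v) +
          ∑ k ∈ Finset.Icc 1 K,
            2 / ((k : ℝ) * π) * w k * Real.sin ((k : ℝ) * π * (e - p.1) / (p.2 - p.1)) *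
              ∫ v in (Set.Icc p.1 p.2)ᶜ,
                Real.cos ((k : ℝ) * π * (v - p.1) / (p.2 - p.1)) * f v)
      (Filter.atBot ×ˢ Filter.atTop) (nhds 0) :=
  cos_range_truncation_error_filtered_tendsto_zero_general f hf_int K w e
end

section
/- Let a < b be reals, let C_0 and (C_k)_{k≥1} be real numbers with ∑_{k=1}^∞ |C_k| < ∞, and let g : ℝ → ℝ satisfy g(v) = C_0/2 + ∑_{k=1}^∞ C_k · cos(kπ(v−a)/(b−a)) for all v ∈ [a,b]. Then ∫_a^b max(v,0) · g(v) dv = (C_0/4)·(max(b,0)² − max(a,0)²) + ∑_{k=1}^∞ C_k · ((b−a)/(kπ)) · [ max(b,0)·sin(kπ(max(b,0)−a)/(b−a)) − max(a,0)·sin(kπ(max(a,0)−a)/(b−a)) + ((b−a)/(kπ))·( cos(kπ(max(b,0)−a)/(b−a)) − cos(kπ(max(a,0)−a)/(b−a)) ) ], where the series on the right converges absolutely. -/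
/-!
Only `v ≥ 0` contributes, so `∫ₐᵇ max(v,0) g(v) dv` is `∫ v g(v) dv` over
`[max(a,0), max(b,0)]`, and against each cosine this integrates in closed form (by parts).
The cosine series is dominated by `∑ |C_k|`, so dominated convergence lets it be integrated
term by term, and the same domination bounds the `k`-th term of the result by
`|C_k| ∫ |max(v,0)|`, which gives absolute convergence.
-/

open Real MeasureTheory

section TermwiseIntegration

variable {a b M : ℝ} {w : ℝ → ℝ} {c : ℕ → ℝ} {φ : ℕ → ℝ → ℝ}

theorem hasSum_intervalIntegral_mul_tsum (hw : IntervalIntegrable w volume a b)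
    (hφ : ∀ k, AEStronglyMeasurable (φ k)) (hφ_le : ∀ k x, |φ k x| ≤ M)
    (hc : Summable fun k => |c k|) :
    HasSum (fun k => c k * ∫ x in a..b, w x * φ k x)
      (∫ x in a..b, w x * ∑' k, c k * φ k x) := by
  have hsummable : ∀ x, Summable fun k => c k * φ k x := fun x =>
    (hc.mul_right M).of_norm_bounded fun k => norm_mul_le_of_le le_rfl (hφ_le k x)
  have h := intervalIntegral.hasSum_integral_of_dominated_convergence
    (F := fun k x => w x * (c k * φ k x)) (fun k x => |w x| * (|c k| * M))
    (fun k => hw.def'.aestronglyMeasurable.mul ((hφ k).restrict.const_mul _))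
    (fun k => ae_of_all _ fun x _ =>
      norm_mul_le_of_le le_rfl (norm_mul_le_of_le le_rfl (hφ_le k x)))
    (ae_of_all _ fun x _ => (hc.mul_right M).mul_left _)
    (by simpa only [tsum_mul_left, tsum_mul_right] using hw.abs.mul_const _)
    (ae_of_all _ fun x _ => (hsummable x).hasSum.mul_left (w x))
  simpa only [mul_left_comm (w _), intervalIntegral.integral_const_mul] using h

theorem summable_abs_mul_intervalIntegral (hw : IntervalIntegrable w volume a b)
    (hφ_le : ∀ k x, |φ k x| ≤ M) (hc : Summable fun k => |c k|) :
    Summable fun k => |c k * ∫ x in a..b, w x * φ k x| := by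
  have hbound : ∀ k, ‖∫ x in a..b, w x * φ k x‖ ≤ |∫ x in a..b, |w x| * M| := fun k =>
    intervalIntegral.norm_integral_le_abs_of_norm_le
      (ae_of_all _ fun x => norm_mul_le_of_le le_rfl (hφ_le k x)) (hw.abs.mul_const M)
  refine (hc.mul_right |∫ x in a..b, |w x| * M|).of_nonneg_of_le (fun k => abs_nonneg _)
    fun k => ?_
  rw [abs_mul]
  exact mul_le_mul_of_nonneg_left (hbound k) (abs_nonneg _)

theorem intervalIntegrable_mul_tsum (hw : IntervalIntegrable w volume a b)
    (hφ : ∀ k, Continuous (φ k)) (hφ_le : ∀ k x, |φ k x| ≤ M)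
    (hc : Summable fun k => |c k|) :
    IntervalIntegrable (fun x => w x * ∑' k, c k * φ k x) volume a b :=
  hw.mul_continuousOn (continuous_tsum (fun k => (hφ k).const_mul (c k)) (hc.mul_right M)
    fun k x => norm_mul_le_of_le le_rfl (hφ_le k x)).continuousOn

end TermwiseIntegration

section PositivePart

variable {φ : ℝ → ℝ}

theorem integral_max_zero_mul_to_max_zero (x : ℝ) :
    ∫ v in x..max x 0, max v 0 * φ v = 0 := by
  rcases le_or_gt 0 x with hx | hx
  · rw [max_eq_left hx, intervalIntegral.integral_same]
  · rw [max_eq_right hx.le]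
    refine (intervalIntegral.integral_congr fun v hv => ?_).trans intervalIntegral.integral_zero
    rw [Set.uIcc_of_le hx.le] at hv
    simp only [max_eq_right hv.2, zero_mul]

theorem integral_max_zero_mul (hφ : Continuous φ) (a b : ℝ) :
    ∫ v in a..b, max v 0 * φ v = ∫ v in max a 0..max b 0, v * φ v := by
  have hint : ∀ x y : ℝ, IntervalIntegrable (fun v => max v 0 * φ v) volume x y :=
    fun x y => ((continuous_id.max continuous_const).mul hφ).intervalIntegrable x y
  have hpos : ∫ v in max a 0..max b 0, max v 0 * φ v = ∫ v in max a 0..max b 0, v * φ v := by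
    refine intervalIntegral.integral_congr fun v hv => ?_
    have : 0 ≤ v := (le_min (le_max_right a 0) (le_max_right b 0)).trans hv.1
    simp only [max_eq_left this]
  rw [← intervalIntegral.integral_add_adjacent_intervals (hint a (max a 0)) (hint _ b),
    ← intervalIntegral.integral_add_adjacent_intervals (hint _ (max b 0)) (hint _ b),
    intervalIntegral.integral_symm b, integral_max_zero_mul_to_max_zero,
    integral_max_zero_mul_to_max_zero, hpos]
  ring

theorem integral_max_zero (a b : ℝ) :
    ∫ v in a..b, max v 0 = (max b 0 ^ 2 - max a 0 ^ 2) / 2 := by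
  simpa only [mul_one, integral_id] using
    integral_max_zero_mul (φ := fun _ => 1) continuous_const a b

end PositivePart

theorem hasDerivAt_mul_sin_div_add_cos_div_sq {c : ℝ} (hc : c ≠ 0) (x₀ v : ℝ) :
    HasDerivAt (fun v => v * sin (c * (v - x₀)) / c + cos (c * (v - x₀)) / c ^ 2)
      (v * cos (c * (v - x₀))) v := by
  have hlin : HasDerivAt (fun v => c * (v - x₀)) c v := by
    simpa using ((hasDerivAt_id v).sub_const x₀).const_mul c
  refine ((((hasDerivAt_id' v).mul hlin.sin).div_const c).add
    (hlin.cos.div_const (c ^ 2))).congr_deriv ?_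
  field_simp
  ring

theorem integral_max_zero_mul_cos {c : ℝ} (hc : c ≠ 0) (x₀ a b : ℝ) :
    ∫ v in a..b, max v 0 * cos (c * (v - x₀)) =
      c⁻¹ * (max b 0 * sin (c * (max b 0 - x₀)) - max a 0 * sin (c * (max a 0 - x₀)) +
        c⁻¹ * (cos (c * (max b 0 - x₀)) - cos (c * (max a 0 - x₀)))) := by
  rw [integral_max_zero_mul (by fun_prop), intervalIntegral.integral_eq_sub_of_hasDerivAt
    (fun v _ => hasDerivAt_mul_sin_div_add_cos_div_sq hc x₀ v)
    ((by fun_prop : Continuous _).intervalIntegrable _ _)]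
  field_simp
  ring

theorem integral_max_zero_mul_cos_div {ω a b : ℝ} (hω : ω ≠ 0) (hab : a ≠ b) :
    ∫ v in a..b, max v 0 * cos (ω * (v - a) / (b - a)) =
      (b - a) / ω * (max b 0 * sin (ω * (max b 0 - a) / (b - a)) -
        max a 0 * sin (ω * (max a 0 - a) / (b - a)) +
        (b - a) / ω *
          (cos (ω * (max b 0 - a) / (b - a)) - cos (ω * (max a 0 - a) / (b - a)))) := by
  have hc : ω / (b - a) ≠ 0 := div_ne_zero hω (sub_ne_zero.2 hab.symm)
  simpa only [div_mul_eq_mul_div, inv_div] using integral_max_zero_mul_cos hc a a b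

/-- The paper's semi-analytical Expected Exposure formula: plugging the Fourier-cosine
series expansion of the density into `∫ max(v,0) g(v) dv` and exchanging summation and
integration. -/
theorem expected_exposure_cos_formula
    (a b : ℝ) (hab : a < b) (C : ℕ → ℝ)
    (hC : Summable fun k : ℕ => |C (k + 1)|)
    (g : ℝ → ℝ)
    (hg : ∀ v ∈ Set.Icc a b,
      g v = C 0 / 2 +
        ∑' k : ℕ, C (k + 1) * Real.cos (((k : ℝ) + 1) * π * (v - a) / (b - a))) :
    (Summable fun k : ℕ =>
      |C (k + 1) * ((b - a) / (((k : ℝ) + 1) * π)) *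
        (max b 0 * Real.sin (((k : ℝ) + 1) * π * (max b 0 - a) / (b - a)) -
          max a 0 * Real.sin (((k : ℝ) + 1) * π * (max a 0 - a) / (b - a)) +
          (b - a) / (((k : ℝ) + 1) * π) *
            (Real.cos (((k : ℝ) + 1) * π * (max b 0 - a) / (b - a)) -
              Real.cos (((k : ℝ) + 1) * π * (max a 0 - a) / (b - a))))|) ∧
    ∫ v in a..b, max v 0 * g v =
      C 0 / 4 * (max b 0 ^ 2 - max a 0 ^ 2) +
        ∑' k : ℕ, C (k + 1) * ((b - a) / (((k : ℝ) + 1) * π)) *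
          (max b 0 * Real.sin (((k : ℝ) + 1) * π * (max b 0 - a) / (b - a)) -
            max a 0 * Real.sin (((k : ℝ) + 1) * π * (max a 0 - a) / (b - a)) +
            (b - a) / (((k : ℝ) + 1) * π) *
              (Real.cos (((k : ℝ) + 1) * π * (max b 0 - a) / (b - a)) -
                Real.cos (((k : ℝ) + 1) * π * (max a 0 - a) / (b - a)))) := by
  have hw : IntervalIntegrable (fun v => max v 0) volume a b :=
    (continuous_id.max continuous_const).intervalIntegrable a b
  have hφ : ∀ k : ℕ, Continuous fun v => cos (((k : ℝ) + 1) * π * (v - a) / (b - a)) :=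
    fun k => by fun_prop
  have hφ_le : ∀ (k : ℕ) v, |cos (((k : ℝ) + 1) * π * (v - a) / (b - a))| ≤ 1 :=
    fun _ _ => abs_cos_le_one _
  have hterm :
      ∀ k : ℕ, ∫ v in a..b, max v 0 * cos (((k : ℝ) + 1) * π * (v - a) / (b - a)) = _ :=
    fun k => integral_max_zero_mul_cos_div (by positivity) hab.ne
  have hsum :=
    hasSum_intervalIntegral_mul_tsum hw (fun k => (hφ k).aestronglyMeasurable) hφ_le hC
  have habs := summable_abs_mul_intervalIntegral hw hφ_le hC
  simp only [hterm, ← mul_assoc] at hsum habs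
  refine ⟨habs, ?_⟩
  calc ∫ v in a..b, max v 0 * g v
      = ∫ v in a..b, (C 0 / 2 * max v 0 +
          max v 0 * ∑' k : ℕ, C (k + 1) * cos (((k : ℝ) + 1) * π * (v - a) / (b - a))) := by
        refine intervalIntegral.integral_congr fun v hv => ?_
        rw [Set.uIcc_of_le hab.le] at hv
        simp only [hg v hv]
        ring
    _ = _ := by
        rw [intervalIntegral.integral_add (hw.const_mul _)
            (intervalIntegrable_mul_tsum hw hφ hφ_le hC), intervalIntegral.integral_const_mul,
          integral_max_zero, hsum.tsum_eq]
        ring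
end
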